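/- arXiv:2003.08677 — 5 statements merged into one kernel-verified Lean document; each statement's English description precedes it below -/
import Mathlib

section
/- Let α > 0 and g(t) = (1 + α t²) e^{α t²/2} for t ≥ 0, with iterated antiderivatives g₁(t) = ∫₀ᵗ g, g₂(t) = ∫₀ᵗ g₁, g₃(t) = ∫₀ᵗ g₂. Then for every t ≥ 0: g₁(t) ≤ g(t)/(2√α), t g₁(t) ≤ g(t)/α, g₂(t) ≤ g(t)/α, t g₂(t) ≤ g(t)/(2 α^{3/2}), t² g₂(t) ≤ g(t)/α², g₃(t) ≤ g(t)/α^{3/2}, and t² g₃(t) ≤ (2/3) g(t)/α^{5/2}. -/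
/-
With E(t) = exp (α t² / 2) one has g₁ = t E and g₂ = (E - 1) / α in closed form, so the
first five bounds follow from E ≥ 1 and AM-GM, 2 √α t ≤ 1 + α t². The iterated integral g₃
has no closed form; it is controlled by comparing derivatives from t = 0. With x = √α t, the
inequality e^{x²/2} - 1 ≤ x e^{x²/2} says g₂ ≤ t E / √α, which integrates to
g₃ ≤ (E - 1) / α^{3/2}. Feeding this into (t² g₃)' = 2 t g₃ + t² g₂ and comparing with
g' = α t (3 + α t²) E reduces the last bound to the scalar inequality
x e^{x²/2} ≤ 2 + x + (2/3) x² e^{x²/2}.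
-/

open Real

theorem Real.exp_sq_div_two_sub_one_le {x : ℝ} (hx : 0 ≤ x) :
    exp (x ^ 2 / 2) - 1 ≤ x * exp (x ^ 2 / 2) := by
  rcases le_or_gt x 2 with hx2 | hx2
  · have h : exp (x ^ 2 / 2) - 1 ≤ x ^ 2 / 2 * exp (x ^ 2 / 2) := by
      have := add_one_le_exp (-(x ^ 2 / 2))
      have hmul : exp (-(x ^ 2 / 2)) * exp (x ^ 2 / 2) = 1 := by rw [← exp_add]; simp
      nlinarith [exp_pos (x ^ 2 / 2)]
    nlinarith [exp_pos (x ^ 2 / 2)]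
  · nlinarith [exp_pos (x ^ 2 / 2)]

theorem Real.exp_three_halves_lt_seven : exp (3 / 2) < 7 := by
  have hsq : exp (3 / 2) ^ 2 = exp 1 ^ 3 := by rw [← exp_nat_mul, ← exp_nat_mul]; norm_num
  have hcube : exp 1 ^ 3 < 3 ^ 3 := pow_lt_pow_left₀ exp_one_lt_three (exp_pos 1).le (by norm_num)
  nlinarith [exp_pos (3 / 2)]

theorem Real.mul_exp_sq_div_two_le {x : ℝ} (hx : 0 ≤ x) :
    x * exp (x ^ 2 / 2) ≤ 2 + x + 2 / 3 * x ^ 2 * exp (x ^ 2 / 2) := by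
  have hE := exp_pos (x ^ 2 / 2)
  rcases le_or_gt (3 / 2) x with hx32 | hx32
  · nlinarith [mul_nonneg (mul_nonneg hx (by linarith : (0 : ℝ) ≤ 2 * x / 3 - 1)) hE.le]
  · have hE7 : exp (x ^ 2 / 2) < 7 :=
      (exp_le_exp.2 (by nlinarith)).trans_lt exp_three_halves_lt_seven
    have hquad : 7 * (x * (1 - 2 * x / 3)) ≤ 2 + x := by nlinarith [sq_nonneg (x - 9 / 14)]
    nlinarith [mul_le_mul_of_nonneg_left hE7.le
      (mul_nonneg hx (by linarith : (0 : ℝ) ≤ 1 - 2 * x / 3))]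

theorem le_of_hasDerivAt_le {f f' B B' : ℝ → ℝ} {a t : ℝ} (hat : a ≤ t)
    (hf : ∀ s, HasDerivAt f (f' s) s) (hB : ∀ s, HasDerivAt B (B' s) s) (ha : f a ≤ B a)
    (hle : ∀ s, a ≤ s → f' s ≤ B' s) : f t ≤ B t :=
  image_le_of_deriv_right_le_deriv_boundary
    (fun s _ => (hf s).continuousAt.continuousWithinAt) (fun s _ => (hf s).hasDerivWithinAt) ha
    (fun s _ => (hB s).continuousAt.continuousWithinAt) (fun s _ => (hB s).hasDerivWithinAt)
    (fun s hs => hle s hs.1) ⟨hat, le_rfl⟩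

theorem hasDerivAt_exp_mul_sq_div_two (c s : ℝ) :
    HasDerivAt (fun u => exp (c * u ^ 2 / 2)) (c * s * exp (c * s ^ 2 / 2)) s :=
  (((hasDerivAt_pow 2 s).const_mul c).div_const 2).exp.congr_deriv (by ring)

theorem hasDerivAt_mul_exp_mul_sq_div_two (c s : ℝ) :
    HasDerivAt (fun u => u * exp (c * u ^ 2 / 2)) ((1 + c * s ^ 2) * exp (c * s ^ 2 / 2)) s :=
  ((hasDerivAt_id' s).mul (hasDerivAt_exp_mul_sq_div_two c s)).congr_deriv (by ring)

theorem hasDerivAt_exp_mul_sq_div_two_sub_one_div {c : ℝ} (hc : c ≠ 0) (s : ℝ) :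
    HasDerivAt (fun u => (exp (c * u ^ 2 / 2) - 1) / c) (s * exp (c * s ^ 2 / 2)) s :=
  (((hasDerivAt_exp_mul_sq_div_two c s).sub_const 1).div_const c).congr_deriv (by field_simp)

theorem hasDerivAt_one_add_mul_sq_mul_exp (c s : ℝ) :
    HasDerivAt (fun u => (1 + c * u ^ 2) * exp (c * u ^ 2 / 2))
      (c * s * (3 + c * s ^ 2) * exp (c * s ^ 2 / 2)) s :=
  ((((hasDerivAt_pow 2 s).const_mul c).const_add 1).mul
    (hasDerivAt_exp_mul_sq_div_two c s)).congr_deriv (by ring)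

theorem integral_one_add_mul_sq_mul_exp (c t : ℝ) :
    ∫ s in (0 : ℝ)..t, (1 + c * s ^ 2) * exp (c * s ^ 2 / 2) = t * exp (c * t ^ 2 / 2) := by
  rw [intervalIntegral.integral_eq_sub_of_hasDerivAt
    (fun s _ => hasDerivAt_mul_exp_mul_sq_div_two c s)
    ((by fun_prop : Continuous _).intervalIntegrable _ _)]
  simp

theorem integral_mul_exp_mul_sq_div_two {c : ℝ} (hc : c ≠ 0) (t : ℝ) :
    ∫ s in (0 : ℝ)..t, s * exp (c * s ^ 2 / 2) = (exp (c * t ^ 2 / 2) - 1) / c := by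
  rw [intervalIntegral.integral_eq_sub_of_hasDerivAt
    (fun s _ => hasDerivAt_exp_mul_sq_div_two_sub_one_div hc s)
    ((by fun_prop : Continuous _).intervalIntegrable _ _)]
  simp

theorem hasDerivAt_integral_exp_sub_one_div (α s : ℝ) :
    HasDerivAt (fun t => ∫ u in (0 : ℝ)..t, (exp (α * u ^ 2 / 2) - 1) / α)
      ((exp (α * s ^ 2 / 2) - 1) / α) s :=
  ((by fun_prop : Continuous fun u => (exp (α * u ^ 2 / 2) - 1) / α).integral_hasStrictDerivAt
    0 s).hasDerivAt

theorem exp_sub_one_div_le_mul_exp_div_sqrt {α s : ℝ} (hα : 0 < α) (hs : 0 ≤ s) :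
    (exp (α * s ^ 2 / 2) - 1) / α ≤ s * exp (α * s ^ 2 / 2) / √α := by
  have key := exp_sq_div_two_sub_one_le (mul_nonneg (sqrt_nonneg α) hs)
  rw [mul_pow, sq_sqrt hα.le] at key
  calc (exp (α * s ^ 2 / 2) - 1) / α ≤ √α * s * exp (α * s ^ 2 / 2) / α := by gcongr
    _ = s * exp (α * s ^ 2 / 2) / √α := by
      rw [div_eq_div_iff hα.ne' (sqrt_pos.2 hα).ne']
      linear_combination s * exp (α * s ^ 2 / 2) * mul_self_sqrt hα.le

theorem integral_exp_sub_one_div_le {α t : ℝ} (hα : 0 < α) (ht : 0 ≤ t) :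
    ∫ s in (0 : ℝ)..t, (exp (α * s ^ 2 / 2) - 1) / α ≤
      (exp (α * t ^ 2 / 2) - 1) / (α * √α) := by
  rw [← div_div]
  exact le_of_hasDerivAt_le ht (hasDerivAt_integral_exp_sub_one_div α)
    (fun s => (hasDerivAt_exp_mul_sq_div_two_sub_one_div hα.ne' s).div_const √α) (by simp)
    fun s hs => exp_sub_one_div_le_mul_exp_div_sqrt hα hs

theorem sq_mul_integral_exp_sub_one_div_le {α t : ℝ} (hα : 0 < α) (ht : 0 ≤ t) :
    t ^ 2 * ∫ s in (0 : ℝ)..t, (exp (α * s ^ 2 / 2) - 1) / α ≤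
      2 / (3 * α ^ 2 * √α) * ((1 + α * t ^ 2) * exp (α * t ^ 2 / 2) - 1) := by
  refine le_of_hasDerivAt_le
    (f := fun t => t ^ 2 * ∫ s in (0 : ℝ)..t, (exp (α * s ^ 2 / 2) - 1) / α) ht
    (fun s => (hasDerivAt_pow 2 s).mul (hasDerivAt_integral_exp_sub_one_div α s))
    (fun s => ((hasDerivAt_one_add_mul_sq_mul_exp α s).sub_const 1).const_mul _) (by simp)
    fun s hs => ?_
  set a := √α
  have ha : 0 < a := sqrt_pos.2 hα
  have hαa : α = a ^ 2 := (sq_sqrt hα.le).symm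
  have hφ := integral_exp_sub_one_div_le hα hs
  have hK := mul_exp_sq_div_two_le (mul_nonneg ha.le hs)
  rw [mul_pow, ← hαa] at hK
  set φ := ∫ u in (0 : ℝ)..s, (exp (α * u ^ 2 / 2) - 1) / α
  set E := exp (α * s ^ 2 / 2)
  calc _ = 2 * s * φ + s ^ 2 * ((E - 1) / α) := by norm_num
    _ ≤ 2 * s * ((E - 1) / (α * a)) + s ^ 2 * ((E - 1) / α) := by gcongr
    _ = s / (α * a) * (2 * (E - 1) + a * s * (E - 1)) := by field_simp
    _ ≤ s / (α * a) * (2 * E + 2 / 3 * (α * s ^ 2) * E) :=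
      mul_le_mul_of_nonneg_left (by linarith) (by positivity)
    _ = _ := by rw [hαa]; field_simp

/-- for α > 0, g(t) = (1 + α t²) e^{α t²/2} and its iterated antiderivatives
g₁, g₂, g₃ (vanishing at 0), for every t ≥ 0:
g₁(t) ≤ g(t)/(2√α), t g₁(t) ≤ g(t)/α, g₂(t) ≤ g(t)/α, t g₂(t) ≤ g(t)/(2 α^{3/2}),
t² g₂(t) ≤ g(t)/α², g₃(t) ≤ g(t)/α^{3/2}, and t² g₃(t) ≤ (2/3) g(t)/α^{5/2}. -/
theorem sup_bounds_of_gaussian_weight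
    (α : ℝ) (hα : 0 < α)
    (g g1 g2 g3 : ℝ → ℝ)
    (hg : ∀ t, g t = (1 + α * t ^ 2) * Real.exp (α * t ^ 2 / 2))
    (hg1 : ∀ t, g1 t = ∫ s in (0:ℝ)..t, g s)
    (hg2 : ∀ t, g2 t = ∫ s in (0:ℝ)..t, g1 s)
    (hg3 : ∀ t, g3 t = ∫ s in (0:ℝ)..t, g2 s) :
    ∀ t : ℝ, 0 ≤ t →
      g1 t ≤ g t / (2 * Real.sqrt α) ∧
      t * g1 t ≤ g t / α ∧
      g2 t ≤ g t / α ∧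
      t * g2 t ≤ g t / (2 * α * Real.sqrt α) ∧
      t ^ 2 * g2 t ≤ g t / α ^ 2 ∧
      g3 t ≤ g t / (α * Real.sqrt α) ∧
      t ^ 2 * g3 t ≤ (2 / 3) * g t / (α ^ 2 * Real.sqrt α) := by
  intro t ht
  have hg1' : g1 = fun t => t * exp (α * t ^ 2 / 2) :=
    funext fun t => by simp only [hg1, hg, integral_one_add_mul_sq_mul_exp]
  have hg2' : g2 = fun t => (exp (α * t ^ 2 / 2) - 1) / α :=
    funext fun t => by simp only [hg2, hg1', integral_mul_exp_mul_sq_div_two hα.ne']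
  have hg3t : g3 t = ∫ s in (0 : ℝ)..t, (exp (α * s ^ 2 / 2) - 1) / α := by
    simp only [hg3, hg2']
  simp only [hg t, hg3t, hg1', hg2']
  set E := exp (α * t ^ 2 / 2)
  have hE : 1 ≤ E := one_le_exp (by positivity)
  have hE_le : E - 1 ≤ (1 + α * t ^ 2) * E := by nlinarith [mul_nonneg hα.le (sq_nonneg t)]
  have hamgm : 2 * √α * t ≤ 1 + α * t ^ 2 := by
    nlinarith [sq_nonneg (√α * t - 1), sq_sqrt hα.le]
  refine ⟨?_, ?_, ?_, ?_, ?_, ?_, ?_⟩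
  · rw [le_div_iff₀ (by positivity)]
    nlinarith
  · rw [le_div_iff₀ hα]
    nlinarith
  · exact div_le_div_of_nonneg_right hE_le hα.le
  · rw [le_div_iff₀ (by positivity)]
    calc t * ((E - 1) / α) * (2 * α * √α) = 2 * √α * t * (E - 1) := by field_simp
      _ ≤ (1 + α * t ^ 2) * E := by nlinarith
  · rw [le_div_iff₀ (by positivity)]
    calc t ^ 2 * ((E - 1) / α) * α ^ 2 = α * t ^ 2 * (E - 1) := by field_simp
      _ ≤ (1 + α * t ^ 2) * E := by nlinarith
  · exact (integral_exp_sub_one_div_le hα ht).trans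
      (div_le_div_of_nonneg_right hE_le (by positivity))
  · calc _ ≤ 2 / (3 * α ^ 2 * √α) * ((1 + α * t ^ 2) * E - 1) :=
          sq_mul_integral_exp_sub_one_div_le hα ht
      _ ≤ 2 / (3 * α ^ 2 * √α) * ((1 + α * t ^ 2) * E) := by gcongr; linarith
      _ = _ := by ring
end

section
/- For every real t, the Dawson function satisfies |D(t)| < 3/5. -/
open Real

/-- The Dawson function D(t) = e^{−t²} ∫₀ᵗ e^{s²} ds. -/
noncomputable def dawson (t : ℝ) : ℝ := Real.exp (-t ^ 2) * ∫ s in (0:ℝ)..t, Real.exp (s ^ 2)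

/-!
Write `E(t) = ∫₀ᵗ e^{s²} ds`. For `a > 0` the function `a e^{t²} - E(t)` has derivative
`e^{t²} (2at - 1)`, so it attains its minimum at `t = 1/(2a)`; since `D(t) < a` means exactly that
this function is positive at `t`, `D < a` holds everywhere as soon as it holds at `1/(2a)`.
For `a = 3/5` it remains to check `D(5/6) < 3/5`, which follows from `e^x ≤ 1 + x + x²` on `[0, 1]`
and `1 + x + x²/2 ≤ e^x`. Oddness of `D` then bounds `|D|`.
-/

open intervalIntegral Set

lemma continuous_exp_sq : Continuous fun s : ℝ => exp (s ^ 2) := by fun_prop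

lemma dawson_neg (t : ℝ) : dawson (-t) = -dawson t := by
  have h := integral_comp_neg (a := 0) (b := t) fun s => exp (s ^ 2)
  simp only [neg_sq, neg_zero] at h
  rw [dawson, dawson, neg_sq, integral_symm, ← h, mul_neg]

lemma dawson_lt_iff {t a : ℝ} :
    dawson t < a ↔ ∫ s in (0:ℝ)..t, exp (s ^ 2) < a * exp (t ^ 2) := by
  rw [dawson, exp_neg, inv_mul_lt_iff₀ (exp_pos _), mul_comm]

lemma integral_exp_sq_le {c : ℝ} (hc₀ : 0 ≤ c) (hc₁ : c ≤ 1) :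
    ∫ s in (0:ℝ)..c, exp (s ^ 2) ≤ c + c ^ 3 / 3 + c ^ 5 / 5 := by
  have hpoly : ∫ s in (0:ℝ)..c, (1 + s ^ 2 + (s ^ 2) ^ 2) = c + c ^ 3 / 3 + c ^ 5 / 5 := by
    simp only [← pow_mul]
    rw [integral_add, integral_add, integral_pow, integral_pow] <;> norm_num
  rw [← hpoly]
  refine integral_mono_on hc₀ (continuous_exp_sq.intervalIntegrable _ _)
    ((by fun_prop : Continuous _).intervalIntegrable _ _) fun s hs => ?_
  have hs2 : |s ^ 2| ≤ 1 := by
    rw [abs_of_nonneg (sq_nonneg s)]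
    nlinarith [hs.1, hs.2]
  linarith [(abs_le.1 (abs_exp_sub_one_sub_id_le hs2)).2]

lemma hasDerivAt_mul_exp_sq_sub_integral (a x : ℝ) :
    HasDerivAt (fun t => a * exp (t ^ 2) - ∫ s in (0:ℝ)..t, exp (s ^ 2))
      (exp (x ^ 2) * (2 * a * x - 1)) x := by
  refine ((((hasDerivAt_pow 2 x).exp).const_mul a).fun_sub
    (continuous_exp_sq.integral_hasStrictDerivAt 0 x).hasDerivAt).congr_deriv ?_
  push_cast
  ring

lemma mul_exp_sq_sub_integral_exp_sq_min {a : ℝ} (ha : 0 < a) (t : ℝ) :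
    a * exp (((2 * a)⁻¹) ^ 2) - ∫ s in (0:ℝ)..(2 * a)⁻¹, exp (s ^ 2)
      ≤ a * exp (t ^ 2) - ∫ s in (0:ℝ)..t, exp (s ^ 2) := by
  have hg := hasDerivAt_mul_exp_sq_sub_integral a
  have hcont := continuous_iff_continuousAt.2 fun x => (hg x).continuousAt
  set c := (2 * a)⁻¹
  have hderiv : ∀ x, exp (x ^ 2) * (2 * a * x - 1) = 2 * a * exp (x ^ 2) * (x - c) := by
    intro x
    simp only [c]
    field_simp
  rcases le_total t c with htc | hct
  · refine antitoneOn_of_hasDerivWithinAt_nonpos (convex_Iic c) hcont.continuousOn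
      (fun x _ => (hg x).hasDerivWithinAt) (fun x hx => ?_) htc (mem_Iic.2 le_rfl) htc
    rw [interior_Iic] at hx
    rw [hderiv]
    exact mul_nonpos_of_nonneg_of_nonpos (by positivity) (by linarith [mem_Iio.1 hx])
  · refine monotoneOn_of_hasDerivWithinAt_nonneg (convex_Ici c) hcont.continuousOn
      (fun x _ => (hg x).hasDerivWithinAt) (fun x hx => ?_) (mem_Ici.2 le_rfl) hct hct
    rw [interior_Ici] at hx
    rw [hderiv]
    exact mul_nonneg (by positivity) (by linarith [mem_Ioi.1 hx])

lemma dawson_lt_of_dawson_inv_two_mul_lt {a : ℝ} (ha : 0 < a) (h : dawson (2 * a)⁻¹ < a)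
    (t : ℝ) : dawson t < a := by
  rw [dawson_lt_iff] at h ⊢
  linarith [mul_exp_sq_sub_integral_exp_sq_min ha t]

lemma dawson_five_sixths_lt : dawson (5 / 6) < 3 / 5 := by
  rw [dawson_lt_iff]
  have hexp := quadratic_le_exp_of_nonneg (sq_nonneg (5 / 6 : ℝ))
  have hint := integral_exp_sq_le (c := 5 / 6) (by norm_num) (by norm_num)
  norm_num at hexp hint ⊢
  linarith

/-- |D(t)| < 3/5 for every real t. -/
theorem abs_dawson_lt : ∀ t : ℝ, |dawson t| < 3 / 5 := by
  have hlt : ∀ t, dawson t < 3 / 5 :=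
    dawson_lt_of_dawson_inv_two_mul_lt (by norm_num) (by norm_num [dawson_five_sixths_lt])
  intro t
  rw [abs_lt]
  exact ⟨by linarith [dawson_neg t, hlt (-t)], hlt t⟩
end

section
/- Let g : [0,∞) → (0,∞) be continuous and monotonically increasing, with g₃(t) = ∫₀ᵗ (∫₀^s (∫₀^u g(v) dv) du) ds. Then for every X ≥ 0, ∫₀^{X} s (X − s)³ g(s) ds ≤ (X²/2) g₃(X). -/
open Set

/-!
By Cauchy's formula for repeated integration, `g₃ X = ∫₀^X (X - s)² / 2 * g s ds`, and
`s (X - s) ≤ X² / 4` (AM-GM) bounds the weight `s (X - s)³` by `X² / 2 * (X - s)² / 2`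
pointwise, so the claim follows from `g ≥ 0`.
-/

theorem intervalIntegral.integral_sub_pow_mul_primitive {f : ℝ → ℝ} {a b : ℝ}
    (hf : ContinuousOn f (uIcc a b)) (n : ℕ) :
    ∫ s in a..b, (b - s) ^ n * ∫ u in a..s, f u
      = ∫ s in a..b, (b - s) ^ (n + 1) / (n + 1) * f s := by
  have hv (x : ℝ) : HasDerivAt (fun s ↦ -(b - s) ^ (n + 1) / (n + 1)) ((b - x) ^ n) x := by
    refine ((((hasDerivAt_id' x).const_sub b).fun_pow (n + 1)).fun_neg.div_const
      ((n : ℝ) + 1)).congr_deriv ?_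
    rw [Nat.add_sub_cancel]
    push_cast
    field_simp
  have hF (x : ℝ) (hx : x ∈ Ioo (min a b) (max a b)) :
      HasDerivAt (fun s ↦ ∫ u in a..s, f u) (f x) x :=
    intervalIntegral.integral_hasDerivAt_right
      (hf.mono (uIcc_subset_uIcc_left (Ioo_subset_Icc_self hx))).intervalIntegrable
      ((hf.mono Ioo_subset_Icc_self).stronglyMeasurableAtFilter isOpen_Ioo x hx)
      (hf.continuousAt (Icc_mem_nhds hx.1 hx.2))
  have hibp := intervalIntegral.integral_mul_deriv_eq_deriv_mul_of_hasDerivAt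
    (intervalIntegral.continuousOn_primitive_interval (hf.integrableOn_compact isCompact_uIcc))
    (fun x _ ↦ (hv x).continuousAt.continuousWithinAt) hF (fun x _ ↦ hv x) hf.intervalIntegrable
    ((by fun_prop : Continuous fun s ↦ (b - s) ^ n).intervalIntegrable _ _)
  calc ∫ s in a..b, (b - s) ^ n * ∫ u in a..s, f u
      = ∫ s in a..b, (∫ u in a..s, f u) * (b - s) ^ n := by simp only [mul_comm]
    _ = -∫ s in a..b, f s * (-(b - s) ^ (n + 1) / (n + 1)) := by simpa using hibp
    _ = ∫ s in a..b, (b - s) ^ (n + 1) / (n + 1) * f s := by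
      rw [← intervalIntegral.integral_neg]
      congr 1 with s
      ring

theorem intervalIntegral.integral_integral_integral_eq_integral_sub_sq_mul {f : ℝ → ℝ} {a b : ℝ}
    (hf : ContinuousOn f (uIcc a b)) :
    ∫ s in a..b, ∫ u in a..s, ∫ v in a..u, f v = ∫ s in a..b, (b - s) ^ 2 / 2 * f s := by
  have hF : ContinuousOn (fun u ↦ ∫ v in a..u, f v) (uIcc a b) :=
    intervalIntegral.continuousOn_primitive_interval (hf.integrableOn_compact isCompact_uIcc)
  calc ∫ s in a..b, ∫ u in a..s, ∫ v in a..u, f v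
      = ∫ s in a..b, (b - s) ^ 1 * ∫ v in a..s, f v := by
        simpa using integral_sub_pow_mul_primitive hF 0
    _ = ∫ s in a..b, (b - s) ^ 2 / 2 * f s := by
        rw [integral_sub_pow_mul_primitive hf 1]
        norm_num

theorem mul_sub_pow_three_le (s X : ℝ) : s * (X - s) ^ 3 ≤ X ^ 2 / 4 * (X - s) ^ 2 := by
  have hamgm : s * (X - s) ≤ X ^ 2 / 4 := by nlinarith [four_mul_le_sq_add s (X - s)]
  calc s * (X - s) ^ 3 = s * (X - s) * (X - s) ^ 2 := by ring
    _ ≤ X ^ 2 / 4 * (X - s) ^ 2 := mul_le_mul_of_nonneg_right hamgm (sq_nonneg _)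

theorem integral_s_cubic_weight_le_general
    (g g3 : ℝ → ℝ)
    (hg_cont : ContinuousOn g (Ici (0 : ℝ)))
    (hg_pos : ∀ t : ℝ, 0 ≤ t → 0 < g t)
    (hg3 : ∀ t, g3 t = ∫ s in (0:ℝ)..t, ∫ u in (0:ℝ)..s, ∫ v in (0:ℝ)..u, g v) :
    ∀ X : ℝ, 0 ≤ X →
      (∫ s in (0:ℝ)..X, s * (X - s) ^ 3 * g s) ≤ X ^ 2 / 2 * g3 X := by
  intro X hX
  have hg : ContinuousOn g (uIcc 0 X) :=
    hg_cont.mono (uIcc_of_le hX ▸ Icc_subset_Ici_self)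
  rw [hg3, intervalIntegral.integral_integral_integral_eq_integral_sub_sq_mul hg,
    ← intervalIntegral.integral_const_mul]
  refine intervalIntegral.integral_mono_on hX ?_ ?_ fun s hs ↦ ?_
  · exact ContinuousOn.intervalIntegrable (by fun_prop)
  · exact ContinuousOn.intervalIntegrable (by fun_prop)
  · calc s * (X - s) ^ 3 * g s ≤ X ^ 2 / 4 * (X - s) ^ 2 * g s :=
          mul_le_mul_of_nonneg_right (mul_sub_pow_three_le s X) (hg_pos s hs.1).le
      _ = X ^ 2 / 2 * ((X - s) ^ 2 / 2 * g s) := by ring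

/-- for continuous, monotonically increasing g : [0,∞) → (0,∞), with
g₃(t) = ∫₀ᵗ (∫₀ˢ (∫₀ᵘ g) du) ds, for every X ≥ 0:
∫₀^X s (X−s)³ g(s) ds ≤ (X²/2) g₃(X). -/
theorem integral_s_cubic_weight_le
    (g g3 : ℝ → ℝ)
    (hg_cont : ContinuousOn g (Ici (0 : ℝ)))
    (hg_mono : MonotoneOn g (Ici (0 : ℝ)))
    (hg_pos : ∀ t : ℝ, 0 ≤ t → 0 < g t)
    (hg3 : ∀ t, g3 t = ∫ s in (0:ℝ)..t, ∫ u in (0:ℝ)..s, ∫ v in (0:ℝ)..u, g v) :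
    ∀ X : ℝ, 0 ≤ X →
      (∫ s in (0:ℝ)..X, s * (X - s) ^ 3 * g s) ≤ X ^ 2 / 2 * g3 X :=
  integral_s_cubic_weight_le_general g g3 hg_cont hg_pos hg3
end

section
/- Let g : [0,∞) → (0,∞) be continuous and monotonically increasing, with g₁(t) = ∫₀ᵗ g(s) ds, g₂(t) = ∫₀ᵗ g₁(s) ds and g₃(t) = ∫₀ᵗ g₂(s) ds. Then for all X ≥ 0 and Y ≥ 0, ∫₀^{X} (X − s)³ g(s) (∫₀^{Y} (s + t) g(t) dt) ds ≤ X² g₂(X) · Y g₁(Y) + (X²/2) g₃(X) · g₁(Y). -/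
/-!
Since `g ≥ 0`, the inner integral is at most `(s + Y) g₁(Y)`, and for `0 ≤ s ≤ X` the polynomial
bound `(X - s)³ (s + Y) ≤ X² Y (X - s) + (X² / 2) (X - s)² / 2` follows from `(X - s)² ≤ X²` and
`s (X - s) ≤ X² / 4`. Integrating against `g` and using Cauchy's formula for repeated integration,
`g₂(X) = ∫₀ˣ (X - s) g(s) ds` and `g₃(X) = ∫₀ˣ (X - s)² / 2 · g(s) ds`, gives the claim.
-/

open Set MeasureTheory
open scoped Interval

theorem integral_primitive_mul_sub_pow {f : ℝ → ℝ} {a b : ℝ} (hf : ContinuousOn f [[a, b]])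
    (n : ℕ) :
    ∫ s in a..b, (∫ t in a..s, f t) * (b - s) ^ n
      = ∫ s in a..b, f s * ((b - s) ^ (n + 1) / (n + 1)) := by
  have hopen : IsOpen (Ioo (min a b) (max a b)) := isOpen_Ioo
  have hf' : ContinuousOn f (Ioo (min a b) (max a b)) := hf.mono Ioo_subset_Icc_self
  have hint : IntervalIntegrable f volume a b := hf.intervalIntegrable
  have hv (x : ℝ) : HasDerivAt (fun s => -((b - s) ^ (n + 1) / (n + 1))) ((b - x) ^ n) x := by
    refine (((hasDerivAt_id' x).const_sub b).fun_pow (n + 1)).div_const ((n : ℝ) + 1)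
      |>.fun_neg |>.congr_deriv ?_
    push_cast
    field_simp
  rw [intervalIntegral.integral_mul_deriv_eq_deriv_mul_of_hasDerivAt
    (intervalIntegral.continuousOn_primitive_interval' hint left_mem_uIcc) (by fun_prop)
    (fun x hx => intervalIntegral.integral_hasDerivAt_right
      (hint.mono_set (uIcc_subset_uIcc_left (Ioo_subset_Icc_self hx)))
      (hf'.stronglyMeasurableAtFilter hopen x hx) (hf'.continuousAt (hopen.mem_nhds hx)))
    (fun x _ => hv x) hint ((by fun_prop : Continuous fun s => (b - s) ^ n).intervalIntegrable _ _)]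
  simp [intervalIntegral.integral_neg]

theorem integral_primitive_eq_integral_mul_sub {f : ℝ → ℝ} {a b : ℝ}
    (hf : ContinuousOn f [[a, b]]) :
    ∫ s in a..b, ∫ t in a..s, f t = ∫ s in a..b, f s * (b - s) := by
  simpa using integral_primitive_mul_sub_pow hf 0

theorem integral_primitive_primitive_eq_integral_mul_sub_sq {f : ℝ → ℝ} {a b : ℝ}
    (hf : ContinuousOn f [[a, b]]) :
    ∫ s in a..b, ∫ u in a..s, ∫ t in a..u, f t = ∫ s in a..b, f s * ((b - s) ^ 2 / 2) := by
  rw [integral_primitive_eq_integral_mul_sub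
    (intervalIntegral.continuousOn_primitive_interval' hf.intervalIntegrable left_mem_uIcc)]
  simpa [one_add_one_eq_two] using integral_primitive_mul_sub_pow hf 1

theorem integral_add_mul_eq {f : ℝ → ℝ} {a b : ℝ} (hf : IntervalIntegrable f volume a b)
    (c : ℝ) : ∫ t in a..b, (c + t) * f t = c * (∫ t in a..b, f t) + ∫ t in a..b, t * f t := by
  simp only [add_mul]
  rw [intervalIntegral.integral_add (hf.const_mul c) (hf.continuousOn_mul (continuousOn_id' _)),
    intervalIntegral.integral_const_mul]

theorem integral_mul_le_right_mul_integral {f : ℝ → ℝ} {a b : ℝ} (hab : a ≤ b)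
    (hf : IntervalIntegrable f volume a b) (hf₀ : ∀ t ∈ Icc a b, 0 ≤ f t) :
    ∫ t in a..b, t * f t ≤ b * ∫ t in a..b, f t := by
  rw [← intervalIntegral.integral_const_mul]
  exact intervalIntegral.integral_mono_on hab (hf.continuousOn_mul (continuousOn_id' _))
    (hf.const_mul b) fun t ht => mul_le_mul_of_nonneg_right ht.2 (hf₀ t ht)

theorem sub_pow_three_mul_add_le {s X Y : ℝ} (hs : 0 ≤ s) (hsX : s ≤ X) (hY : 0 ≤ Y) :
    (X - s) ^ 3 * (s + Y) ≤ X ^ 2 * Y * (X - s) + X ^ 2 / 2 * ((X - s) ^ 2 / 2) := by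
  have hXs : 0 ≤ X - s := by linarith
  have h_amgm : (X - s) * s ≤ X ^ 2 / 4 := by nlinarith [sq_nonneg (X - 2 * s)]
  have h_sq : (X - s) ^ 2 ≤ X ^ 2 := by nlinarith
  nlinarith [mul_le_mul_of_nonneg_left h_amgm (sq_nonneg (X - s)),
    mul_le_mul_of_nonneg_left h_sq (mul_nonneg hXs hY)]

theorem sub_pow_three_mul_le {s X Y c m : ℝ} (hs : 0 ≤ s) (hsX : s ≤ X) (hY : 0 ≤ Y)
    (hc : 0 ≤ c) (hm : m ≤ Y * c) :
    (X - s) ^ 3 * (s * c + m) ≤ c * (X ^ 2 * Y * (X - s) + X ^ 2 / 2 * ((X - s) ^ 2 / 2)) :=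
  calc (X - s) ^ 3 * (s * c + m) ≤ (X - s) ^ 3 * (s + Y) * c := by
        have : 0 ≤ (X - s) ^ 3 := pow_nonneg (by linarith) 3
        nlinarith
    _ ≤ _ := by
        rw [mul_comm]
        exact mul_le_mul_of_nonneg_left (sub_pow_three_mul_add_le hs hsX hY) hc

theorem integral_massmass_le_general
    (g g1 g2 g3 : ℝ → ℝ)
    (hg_cont : ContinuousOn g (Ici (0 : ℝ)))
    (hg_pos : ∀ t : ℝ, 0 ≤ t → 0 < g t)
    (hg1 : ∀ t, g1 t = ∫ s in (0:ℝ)..t, g s)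
    (hg2 : ∀ t, g2 t = ∫ s in (0:ℝ)..t, g1 s)
    (hg3 : ∀ t, g3 t = ∫ s in (0:ℝ)..t, g2 s) :
    ∀ X Y : ℝ, 0 ≤ X → 0 ≤ Y →
      (∫ s in (0:ℝ)..X, (X - s) ^ 3 * g s * ∫ t in (0:ℝ)..Y, (s + t) * g t)
        ≤ X ^ 2 * g2 X * (Y * g1 Y) + X ^ 2 / 2 * g3 X * g1 Y := by
  intro X Y hX hY
  obtain rfl := funext hg1
  obtain rfl := funext hg2
  obtain rfl := funext hg3
  have hg_cont_on {Z : ℝ} (hZ : 0 ≤ Z) : ContinuousOn g [[0, Z]] :=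
    hg_cont.mono (uIcc_of_le hZ ▸ Icc_subset_Ici_self)
  have hgX := hg_cont_on hX
  have hgY := (hg_cont_on hY).intervalIntegrable (μ := volume)
  have hg_nonneg : ∀ t ∈ Icc 0 Y, 0 ≤ g t := fun t ht => (hg_pos t ht.1).le
  simp only [integral_add_mul_eq hgY, integral_primitive_eq_integral_mul_sub hgX,
    integral_primitive_primitive_eq_integral_mul_sub_sq hgX]
  set c := (∫ t in (0:ℝ)..Y, g t)
  calc _ ≤ ∫ s in (0:ℝ)..X, c * (X ^ 2 * Y) * (g s * (X - s))
          + c * (X ^ 2 / 2) * (g s * ((X - s) ^ 2 / 2)) := by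
        refine intervalIntegral.integral_mono_on hX (ContinuousOn.intervalIntegrable (by fun_prop))
          (ContinuousOn.intervalIntegrable (by fun_prop)) fun s hs => ?_
        have h := sub_pow_three_mul_le hs.1 hs.2 hY (intervalIntegral.integral_nonneg hY hg_nonneg)
          (integral_mul_le_right_mul_integral hY hgY hg_nonneg)
        linear_combination mul_le_mul_of_nonneg_right h (hg_pos s hs.1).le
    _ = _ := by
        rw [intervalIntegral.integral_add
            ((hgX.intervalIntegrable.mul_continuousOn (by fun_prop)).const_mul _)
            ((hgX.intervalIntegrable.mul_continuousOn (by fun_prop)).const_mul _),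
          intervalIntegral.integral_const_mul, intervalIntegral.integral_const_mul]
        ring

/-- for continuous, monotonically increasing g : [0,∞) → (0,∞), with
iterated antiderivatives g₁, g₂, g₃, for all X ≥ 0 and Y ≥ 0:
∫₀^X (X−s)³ g(s) (∫₀^Y (s+t) g(t) dt) ds ≤ X² g₂(X) Y g₁(Y) + (X²/2) g₃(X) g₁(Y). -/
theorem integral_massmass_le
    (g g1 g2 g3 : ℝ → ℝ)
    (hg_cont : ContinuousOn g (Ici (0 : ℝ)))
    (hg_mono : MonotoneOn g (Ici (0 : ℝ)))
    (hg_pos : ∀ t : ℝ, 0 ≤ t → 0 < g t)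
    (hg1 : ∀ t, g1 t = ∫ s in (0:ℝ)..t, g s)
    (hg2 : ∀ t, g2 t = ∫ s in (0:ℝ)..t, g1 s)
    (hg3 : ∀ t, g3 t = ∫ s in (0:ℝ)..t, g2 s) :
    ∀ X Y : ℝ, 0 ≤ X → 0 ≤ Y →
      (∫ s in (0:ℝ)..X, (X - s) ^ 3 * g s * ∫ t in (0:ℝ)..Y, (s + t) * g t)
        ≤ X ^ 2 * g2 X * (Y * g1 Y) + X ^ 2 / 2 * g3 X * g1 Y :=
  integral_massmass_le_general g g1 g2 g3 hg_cont hg_pos hg1 hg2 hg3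
end

section
/- Let g : [0,∞) → (0,∞) be continuous and monotonically increasing, with g₁(t) = ∫₀ᵗ g(s) ds, g₂(t) = ∫₀ᵗ g₁(s) ds and g₃(t) = ∫₀ᵗ g₂(s) ds. Then for all X ≥ 0 and Y ≥ 0, ∫₀^{X} (X − ρ) g(ρ) [ |Y − ρ| g₁(Y) + g₂(min(ρ, Y)) ] dρ ≤ 3 (X + Y) g₂(X) g₁(Y) + 2 g₃(X) g₁(Y). -/
/-!
Since `g₁` is nonnegative and nondecreasing, `g₂(min ρ Y) ≤ ρ g₁(Y)`, and `|Y - ρ| ≤ X + Y`, so the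
bracket is at most `2 (X + Y) g₁(Y)`. By Cauchy's formula for repeated integration,
`∫₀^X (X - ρ) g(ρ) dρ = g₂(X)`, so the left side is at most `2 (X + Y) g₂(X) g₁(Y)`.
-/

open Real Set MeasureTheory intervalIntegral

section

variable {f h : ℝ → ℝ} {a b : ℝ}

-- No integrability of `f` is needed: otherwise the left side is `0`.
theorem intervalIntegral.integral_mono_on_of_nonneg (hab : a ≤ b)
    (hf : ∀ x ∈ Icc a b, 0 ≤ f x) (hh : IntervalIntegrable h volume a b)
    (hfh : ∀ x ∈ Icc a b, f x ≤ h x) : ∫ x in a..b, f x ≤ ∫ x in a..b, h x := by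
  rw [integral_of_le hab, integral_of_le hab]
  have hIoc : ∀ P : ℝ → Prop, (∀ x ∈ Icc a b, P x) → ∀ᵐ x ∂volume.restrict (Ioc a b), P x :=
    fun P hP ↦ ae_restrict_of_forall_mem measurableSet_Ioc fun x hx ↦ hP x (Ioc_subset_Icc_self hx)
  exact integral_mono_of_nonneg (hIoc _ hf) hh.1 (hIoc _ hfh)

theorem MonotoneOn.intervalIntegral_le_sub_mul (hf : MonotoneOn f (Icc a b)) (hab : a ≤ b) :
    ∫ x in a..b, f x ≤ (b - a) * f b := by
  have hle : ∫ x in a..b, f x ≤ ∫ _ in a..b, f b :=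
    integral_mono_on hab (uIcc_of_le hab ▸ hf).intervalIntegrable
      intervalIntegrable_const fun x hx ↦ hf hx ⟨hab, le_rfl⟩ hx.2
  simpa using hle

theorem monotoneOn_primitive_of_nonneg (hf : ContinuousOn f (Ici a))
    (hf₀ : ∀ x ∈ Ici a, 0 ≤ f x) : MonotoneOn (fun x ↦ ∫ t in a..x, f t) (Ici a) := by
  intro u hu v hv huv
  refine integral_mono_interval le_rfl hu huv ?_ ?_
  · exact ae_restrict_of_forall_mem measurableSet_Ioc fun x hx ↦ hf₀ x hx.1.le
  · exact (hf.mono (by rw [uIcc_of_le (mem_Ici.mp hv)]; exact Icc_subset_Ici_self)).intervalIntegrable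

theorem integral_sub_mul_eq_integral_primitive (hf : ContinuousOn f (uIcc a b)) :
    ∫ x in a..b, (b - x) * f x = ∫ x in a..b, ∫ t in a..x, f t := by
  have hF : ContinuousOn (fun x ↦ ∫ t in a..x, f t) (uIcc a b) :=
    continuousOn_primitive_interval (hf.integrableOn_compact isCompact_uIcc)
  have hderiv : ∀ x ∈ Ioo (min a b) (max a b), HasDerivAt (fun x ↦ ∫ t in a..x, f t) (f x) x := by
    intro x hx
    have hIoo : Ioo (min a b) (max a b) ⊆ uIcc a b := Ioo_subset_Icc_self
    exact integral_hasDerivAt_right (hf.mono (uIcc_subset_uIcc_left (hIoo hx))).intervalIntegrable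
      ((hf.mono hIoo).stronglyMeasurableAtFilter isOpen_Ioo x hx)
      (hf.continuousAt (Icc_mem_nhds hx.1 hx.2))
  rw [integral_mul_deriv_eq_deriv_mul_of_hasDerivAt (u := fun x ↦ b - x) (by fun_prop) hF
    (fun x _ ↦ (hasDerivAt_id x).const_sub b) hderiv intervalIntegrable_const
    hf.intervalIntegrable]
  simp

end

theorem abs_sub_mul_add_integral_min_le {F : ℝ → ℝ} (hF : MonotoneOn F (Ici 0)) (hF₀ : 0 ≤ F 0)
    {X Y ρ : ℝ} (hρ : ρ ∈ Icc 0 X) (hY : 0 ≤ Y) :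
    |Y - ρ| * F Y + ∫ s in 0..min ρ Y, F s ≤ 2 * (X + Y) * F Y := by
  have hm₀ : 0 ≤ min ρ Y := le_min hρ.1 hY
  have hFY : 0 ≤ F Y := hF₀.trans (hF self_mem_Ici hY hY)
  have hFm : ∫ s in 0..min ρ Y, F s ≤ ρ * F Y :=
    calc ∫ s in 0..min ρ Y, F s
        ≤ (min ρ Y - 0) * F (min ρ Y) :=
          (hF.mono Icc_subset_Ici_self).intervalIntegral_le_sub_mul hm₀
      _ ≤ ρ * F Y := by
          rw [sub_zero]
          exact mul_le_mul (min_le_left ρ Y) (hF hm₀ hY (min_le_right ρ Y)) (hF₀.trans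
            (hF self_mem_Ici hm₀ hm₀)) hρ.1
  have habs : |Y - ρ| ≤ X + Y := abs_le.mpr ⟨by linarith [hρ.2], by linarith [hρ.1, hρ.2]⟩
  nlinarith [mul_le_mul_of_nonneg_right habs hFY, hρ.2]

theorem integral_sub_mul_mul_le {g F : ℝ → ℝ} {X Y : ℝ} (hX : 0 ≤ X) (hY : 0 ≤ Y)
    (hg : ContinuousOn g (uIcc 0 X)) (hg₀ : ∀ ρ ∈ Icc 0 X, 0 ≤ g ρ)
    (hF : MonotoneOn F (Ici 0)) (hF₀ : 0 ≤ F 0) :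
    ∫ ρ in 0..X, (X - ρ) * g ρ * (|Y - ρ| * F Y + ∫ s in 0..min ρ Y, F s)
      ≤ (∫ ρ in 0..X, (X - ρ) * g ρ) * (2 * (X + Y) * F Y) := by
  have hkernel : ∀ ρ ∈ Icc 0 X, 0 ≤ (X - ρ) * g ρ := fun ρ hρ ↦
    mul_nonneg (sub_nonneg.mpr hρ.2) (hg₀ ρ hρ)
  have hF_nonneg : ∀ t ∈ Ici (0 : ℝ), 0 ≤ F t := fun t ht ↦ hF₀.trans (hF self_mem_Ici ht ht)
  rw [← intervalIntegral.integral_mul_const]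
  refine integral_mono_on_of_nonneg hX (fun ρ hρ ↦ ?_) ?_ fun ρ hρ ↦ ?_
  · have hm₀ : 0 ≤ min ρ Y := le_min hρ.1 hY
    exact mul_nonneg (hkernel ρ hρ) (add_nonneg (mul_nonneg (abs_nonneg _) (hF_nonneg Y hY))
      (integral_nonneg hm₀ fun s hs ↦ hF_nonneg s hs.1))
  · exact (by fun_prop : ContinuousOn (fun ρ ↦ (X - ρ) * g ρ * (2 * (X + Y) * F Y))
      (uIcc 0 X)).intervalIntegrable
  · exact mul_le_mul_of_nonneg_left (abs_sub_mul_add_integral_min_le hF hF₀ hρ hY) (hkernel ρ hρ)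

theorem integral_mixed_term_le_general
    (g g1 g2 g3 : ℝ → ℝ)
    (hg_cont : ContinuousOn g (Ici (0 : ℝ)))
    (hg_pos : ∀ t : ℝ, 0 ≤ t → 0 < g t)
    (hg1 : ∀ t, g1 t = ∫ s in (0:ℝ)..t, g s)
    (hg2 : ∀ t, g2 t = ∫ s in (0:ℝ)..t, g1 s)
    (hg3 : ∀ t, g3 t = ∫ s in (0:ℝ)..t, g2 s) :
    ∀ X Y : ℝ, 0 ≤ X → 0 ≤ Y →
      (∫ ρ in (0:ℝ)..X, (X - ρ) * g ρ * (|Y - ρ| * g1 Y + g2 (min ρ Y)))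
        ≤ 3 * (X + Y) * g2 X * g1 Y + 2 * g3 X * g1 Y := by
  intro X Y hX hY
  have hg_Icc : ContinuousOn g (uIcc 0 X) := hg_cont.mono (uIcc_of_le hX ▸ Icc_subset_Ici_self)
  have hg1_mono : MonotoneOn g1 (Ici 0) := by
    simpa only [← hg1] using monotoneOn_primitive_of_nonneg hg_cont fun t ht ↦ (hg_pos t ht).le
  have hg1_zero : g1 0 = 0 := by simp [hg1]
  have hg1_nonneg : ∀ t ∈ Ici (0 : ℝ), 0 ≤ g1 t := fun t ht ↦
    hg1_zero ▸ hg1_mono self_mem_Ici ht ht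
  have hg2_nonneg : ∀ t ∈ Ici (0 : ℝ), 0 ≤ g2 t := fun t ht ↦
    hg2 t ▸ integral_nonneg ht fun s hs ↦ hg1_nonneg s hs.1
  have hg3X : 0 ≤ g3 X := hg3 X ▸ integral_nonneg hX fun t ht ↦ hg2_nonneg t ht.1
  have hbound := integral_sub_mul_mul_le hX hY hg_Icc (fun ρ hρ ↦ (hg_pos ρ hρ.1).le)
    hg1_mono hg1_zero.ge
  rw [integral_sub_mul_eq_integral_primitive hg_Icc] at hbound
  simp only [← hg1, ← hg2] at hbound
  linarith [mul_nonneg (mul_nonneg (add_nonneg hX hY) (hg2_nonneg X hX)) (hg1_nonneg Y hY),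
    mul_nonneg hg3X (hg1_nonneg Y hY)]

/-- for continuous, monotonically increasing g : [0,∞) → (0,∞), with
iterated antiderivatives g₁, g₂, g₃, for all X ≥ 0 and Y ≥ 0:
∫₀^X (X−ρ) g(ρ) [ |Y−ρ| g₁(Y) + g₂(min(ρ,Y)) ] dρ ≤ 3 (X+Y) g₂(X) g₁(Y) + 2 g₃(X) g₁(Y). -/
theorem integral_mixed_term_le
    (g g1 g2 g3 : ℝ → ℝ)
    (hg_cont : ContinuousOn g (Ici (0 : ℝ)))
    (hg_mono : MonotoneOn g (Ici (0 : ℝ)))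
    (hg_pos : ∀ t : ℝ, 0 ≤ t → 0 < g t)
    (hg1 : ∀ t, g1 t = ∫ s in (0:ℝ)..t, g s)
    (hg2 : ∀ t, g2 t = ∫ s in (0:ℝ)..t, g1 s)
    (hg3 : ∀ t, g3 t = ∫ s in (0:ℝ)..t, g2 s) :
    ∀ X Y : ℝ, 0 ≤ X → 0 ≤ Y →
      (∫ ρ in (0:ℝ)..X, (X - ρ) * g ρ * (|Y - ρ| * g1 Y + g2 (min ρ Y)))
        ≤ 3 * (X + Y) * g2 X * g1 Y + 2 * g3 X * g1 Y :=
  integral_mixed_term_le_general g g1 g2 g3 hg_cont hg_pos hg1 hg2 hg3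
end
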